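/- Let n be a positive integer and let T = (τ_0, τ_1, τ_2, ...) be a sequence of finite sequences such that each τ_d is a truncation of [n]^d (in particular τ_0 = (n)). Then the following are equivalent: (i) T is a coherent fractal growth, i.e. τ_j is a truncation of [τ_{j-1}] for every j ≥ 1; (ii) the sequence of lengths (|τ_0|, |τ_1|, |τ_2|, ...) is an O-sequence. -/

import Mathlib

/-- The expansion `[σ]` of a finite sequence of positive integers. -/
def expand (σ : List ℕ) : List ℕ := (σ.map fun a => List.range' 1 a).flatten

/-- The Macaulay operator `h ↦ h^{⟨i⟩}`: if
`h = C(m_i,i) + C(m_{i-1},i-1) + … + C(m_j,j)` (with `m_i > … > m_j ≥ j ≥ 1`) is the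
`i`-binomial expansion of `h > 0`, then
`h^{⟨i⟩} = C(m_i+1,i+1) + C(m_{i-1}+1,i) + … + C(m_j+1,j+1)`; and `0^{⟨i⟩} = 0`.
It is computed greedily: `m_i` is the largest `m` with `C(m,i) ≤ h`. -/
def macaulay : ℕ → ℕ → ℕ
  | _, 0 => 0
  | 0, _ + 1 => 0
  | i + 1, h + 1 =>
    let m := Nat.findGreatest (fun m => m.choose (i + 1) ≤ h + 1) (h + i + 2)
    (m + 1).choose (i + 2) + macaulay i (h + 1 - m.choose (i + 1))

/-- An `O`-sequence: `h_0 = 1` and `h_{i+1} ≤ h_i^{⟨i⟩}` for all `i > 0`. -/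
def IsOSeq (h : ℕ → ℕ) : Prop :=
  h 0 = 1 ∧ ∀ i : ℕ, 0 < i → h (i + 1) ≤ macaulay i (h i)

/-!
Write `[a]^d` for `expand^[d] [a]`. Since `[a+1] = [a] ⌢ (a+1)`, we get
`[a+1]^{d+1} = [a]^{d+1} ⌢ [a+1]^d`, whence `|[a]^{d+1}| = C(a+d, d+1)` by Pascal's rule.
The same splitting shows, by induction on `d` and then on `a`, that every prefix `σ` of
`[a]^d` (`d ≥ 1`) satisfies `|[σ]| = |σ|^{⟨d⟩}`: a long prefix is `[a-1]^d ⌢ ρ` with `ρ` a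
prefix of `[a]^{d-1}`, and `C(a+d-2, d) + |ρ|` is then the leading term of the Macaulay
expansion. Finally, if `τ_d` is a prefix of `[n]^d` then `[τ_d]` is a prefix of `[n]^{d+1}`,
and so is `τ_{d+1}`; of two prefixes of one list, one is a prefix of the other exactly when
it is no longer, so coherence amounts to `|τ_{d+1}| ≤ |[τ_d]| = |τ_d|^{⟨d⟩}`.
-/

theorem List.prefix_or_eq_append_of_prefix_append {α : Type*} {l l₁ l₂ : List α}
    (h : l <+: l₁ ++ l₂) : l <+: l₁ ∨ ∃ ρ, ρ <+: l₂ ∧ l = l₁ ++ ρ := by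
  rcases le_total l.length l₁.length with hle | hle
  · exact .inl (prefix_of_prefix_length_le h (prefix_append l₁ l₂) hle)
  · obtain ⟨ρ, rfl⟩ := prefix_of_prefix_length_le (prefix_append l₁ l₂) h hle
    exact .inr ⟨ρ, (prefix_append_right_inj l₁).1 h, rfl⟩

@[simp]
theorem expand_nil : expand [] = [] := rfl

@[simp]
theorem expand_append (l₁ l₂ : List ℕ) : expand (l₁ ++ l₂) = expand l₁ ++ expand l₂ := by
  simp [expand]

theorem expand_singleton (a : ℕ) : expand [a] = List.range' 1 a := by
  simp [expand]

theorem List.IsPrefix.expand {l₁ l₂ : List ℕ} (h : l₁ <+: l₂) : expand l₁ <+: expand l₂ := by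
  obtain ⟨t, rfl⟩ := h
  exact ⟨_, (expand_append l₁ t).symm⟩

theorem eq_expand_singleton_length_of_prefix {σ : List ℕ} {a : ℕ} (h : σ <+: expand [a]) :
    σ = expand [σ.length] := by
  rw [expand_singleton, List.prefix_iff_eq_take, List.range'_eq_map_range, ← List.map_take,
    List.take_range] at h
  rw [h, expand_singleton]
  simp [List.range'_eq_map_range]

theorem iterate_expand_append (d : ℕ) (l₁ l₂ : List ℕ) :
    expand^[d] (l₁ ++ l₂) = expand^[d] l₁ ++ expand^[d] l₂ := by
  induction d generalizing l₁ l₂ with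
  | zero => rfl
  | succ d ih => simp only [Function.iterate_succ_apply, expand_append, ih]

theorem iterate_expand_succ_singleton_zero (d : ℕ) : expand^[d + 1] [0] = [] :=
  Function.iterate_fixed expand_nil d

theorem iterate_expand_succ_singleton_succ (d a : ℕ) :
    expand^[d + 1] [a + 1] = expand^[d + 1] [a] ++ expand^[d] [a + 1] := by
  rw [Function.iterate_succ_apply, Function.iterate_succ_apply, expand_singleton,
    expand_singleton, List.range'_concat, iterate_expand_append, ← expand_singleton]
  simp [Nat.add_comm]

theorem length_iterate_expand_succ_singleton (d a : ℕ) :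
    (expand^[d + 1] [a]).length = (a + d).choose (d + 1) := by
  induction d generalizing a with
  | zero => simp [expand_singleton]
  | succ d ih =>
    induction a with
    | zero => simp [iterate_expand_succ_singleton_zero]
    | succ a iha =>
      rw [iterate_expand_succ_singleton_succ, List.length_append, iha, ih, Nat.add_comm,
        show a + 1 + d = a + (d + 1) by omega, show a + 1 + (d + 1) = a + (d + 1) + 1 by omega,
        Nat.choose_succ_succ' (a + (d + 1))]

@[simp]
theorem macaulay_zero_right (i : ℕ) : macaulay i 0 = 0 := by
  cases i <;> rfl

theorem self_le_choose_succ_add (c i : ℕ) : c ≤ c.choose (i + 1) + (i + 1) := by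
  induction c with
  | zero => omega
  | succ c ih =>
    rcases le_or_gt (c + 1) (i + 1) with h | h
    · omega
    · have := Nat.choose_pos (n := c) (k := i) (by omega)
      rw [Nat.choose_succ_succ']
      omega

theorem macaulay_choose_add {i c r : ℕ} (hr : r < c.choose i) :
    macaulay (i + 1) (c.choose (i + 1) + r) = (c + 1).choose (i + 2) + macaulay i r := by
  rcases le_or_gt c i with hc | hc
  · have hr0 : r = 0 := by
      rcases hc.eq_or_lt with rfl | hc
      · simpa using hr
      · simp [Nat.choose_eq_zero_of_lt hc] at hr
    subst hr0
    simp [Nat.choose_eq_zero_of_lt, hc]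
  · obtain ⟨h, hh⟩ : ∃ h, c.choose (i + 1) + r = h + 1 :=
      ⟨_, (Nat.succ_pred_eq_of_pos (by have := Nat.choose_pos (k := i + 1) hc; omega)).symm⟩
    -- the greedy step picks `m_{i+1} = c`, as `C(c,i+1) ≤ h+1 < C(c,i+1) + C(c,i) = C(c+1,i+1)`
    have hm : Nat.findGreatest (fun m => m.choose (i + 1) ≤ h + 1) (h + i + 2) = c := by
      refine Nat.findGreatest_eq_iff.2 ⟨?_, fun _ => by omega, fun m hm _ hle => ?_⟩
      · have := self_le_choose_succ_add c i
        omega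
      · have := Nat.choose_le_choose (i + 1) hm
        rw [Nat.choose_succ_succ'] at this
        omega
    rw [hh, macaulay, hm]
    congr 2
    omega

theorem macaulay_choose (i c : ℕ) :
    macaulay (i + 1) (c.choose (i + 1)) = (c + 1).choose (i + 2) := by
  rcases lt_or_ge c i with hc | hc
  · rw [Nat.choose_eq_zero_of_lt (by omega : c < i + 1),
      Nat.choose_eq_zero_of_lt (by omega : c + 1 < i + 2), macaulay_zero_right]
  · simpa using macaulay_choose_add (r := 0) (Nat.choose_pos hc)

theorem macaulay_one_left (k : ℕ) : macaulay 1 k = (k + 1).choose 2 := by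
  simpa using macaulay_choose 0 k

theorem macaulay_choose_add_of_le {i c r : ℕ} (hi : 0 < i) (hr : r ≤ c.choose i) :
    macaulay (i + 1) (c.choose (i + 1) + r) = (c + 1).choose (i + 2) + macaulay i r := by
  rcases hr.lt_or_eq with hr | rfl
  · exact macaulay_choose_add hr
  · obtain ⟨j, rfl⟩ := Nat.exists_eq_add_one_of_ne_zero hi.ne'
    rw [Nat.add_comm (c.choose (j + 1 + 1)), ← Nat.choose_succ_succ', macaulay_choose,
      macaulay_choose, Nat.choose_succ_succ' (c + 1) (j + 2), Nat.add_comm]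

theorem length_expand_eq_macaulay_of_prefix (i a : ℕ) {σ : List ℕ}
    (hσ : σ <+: expand^[i + 1] [a]) : (expand σ).length = macaulay (i + 1) σ.length := by
  induction i generalizing a σ with
  | zero =>
    obtain ⟨k, rfl⟩ : ∃ k, σ = expand [k] := ⟨_, eq_expand_singleton_length_of_prefix hσ⟩
    have hk : (expand [k]).length = k := by simp [expand_singleton]
    rw [hk, macaulay_one_left]
    exact length_iterate_expand_succ_singleton 1 k
  | succ i ih =>
    induction a generalizing σ with
    | zero =>
      rw [iterate_expand_succ_singleton_zero, List.prefix_nil] at hσ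
      simp [hσ]
    | succ a iha =>
      rw [iterate_expand_succ_singleton_succ] at hσ
      obtain hσ | ⟨ρ, hρ, rfl⟩ := List.prefix_or_eq_append_of_prefix_append hσ
      · exact iha hσ
      · have hρlen : ρ.length ≤ (a + i + 1).choose (i + 1) := by
          simpa only [length_iterate_expand_succ_singleton, Nat.add_right_comm a 1 i]
            using hρ.length_le
        rw [expand_append, List.length_append, List.length_append, ih _ hρ,
          ← Function.iterate_succ_apply' expand, length_iterate_expand_succ_singleton,
          length_iterate_expand_succ_singleton]
        exact (macaulay_choose_add_of_le i.succ_pos hρlen).symm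

theorem coherent_fractal_growth_iff_OSeq_general (n : ℕ)
    (T : ℕ → List ℕ) (hT0 : T 0 = [n]) (htr : ∀ d : ℕ, T d <+: expand^[d] [n]) :
    (∀ j : ℕ, 1 ≤ j → T j <+: expand (T (j - 1))) ↔
      IsOSeq (fun d => (T d).length) := by
  have hlen (i : ℕ) (hi : 0 < i) : (expand (T i)).length = macaulay i (T i).length := by
    obtain ⟨i, rfl⟩ := Nat.exists_eq_add_one_of_ne_zero hi.ne'
    exact length_expand_eq_macaulay_of_prefix i n (htr (i + 1))
  have hstep (i : ℕ) :
      T (i + 1) <+: expand (T i) ↔ (T (i + 1)).length ≤ (expand (T i)).length :=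
    ⟨List.IsPrefix.length_le, List.prefix_of_prefix_length_le (htr (i + 1)) <| by
      simpa only [Function.iterate_succ_apply'] using (htr i).expand⟩
  constructor
  · intro hcoh
    refine ⟨by simp [hT0], fun i hi => ?_⟩
    rw [← hlen i hi]
    exact (hstep i).1 (hcoh (i + 1) i.succ_pos)
  · rintro ⟨-, hO⟩ j hj
    obtain ⟨i, rfl⟩ := Nat.exists_eq_add_of_le' hj
    rw [Nat.add_sub_cancel, hstep]
    rcases i.eq_zero_or_pos with rfl | hi
    · simpa [hT0] using (htr 1).length_le
    · rw [hlen i hi]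
      exact hO i hi

/-- Theorem 2.13: let `T = (τ_0, τ_1, τ_2, …)` be a sequence of finite sequences such
that each `τ_d` is a truncation (i.e. a prefix) of `[n]^d`, with `τ_0 = (n)`.  Then `T`
is a coherent fractal growth, i.e. `τ_j` is a truncation of `[τ_{j-1}]` for every
`j ≥ 1`, if and only if the sequence of lengths `(|τ_0|, |τ_1|, |τ_2|, …)` is an
`O`-sequence.  Here `[n]^d = expand^[d] [n]`. -/
theorem coherent_fractal_growth_iff_OSeq (n : ℕ) (hn : 0 < n)
    (T : ℕ → List ℕ) (hT0 : T 0 = [n]) (htr : ∀ d : ℕ, T d <+: expand^[d] [n]) :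
    (∀ j : ℕ, 1 ≤ j → T j <+: expand (T (j - 1))) ↔
      IsOSeq (fun d => (T d).length) :=
  coherent_fractal_growth_iff_OSeq_general n T hT0 htr
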